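/- arXiv:1607.08342 — 6 statements merged into one kernel-verified Lean document; each statement's English description precedes it below -/
import Mathlib

section
/- Let S be a collection of strings of length k, let B be the BWT of S (the array of symbols preceding the lexicographically sorted suffixes of S) and let B_l be the array of symbols preceding the sorted l-suffixes. Let X be the sorted array of all suffixes and X_l the sorted array of l-suffixes. Then the encoding I_B of B as an interleave of B_0,...,B_k equals the encoding I_X of X as an interleave of X_0,...,X_k. -/
open scoped Classical

/-- Symbol type for suffixes: ranked sentinels (ordered by (suffix length, string index))
below all regular alphabet symbols. -/
abbrev SSym (A : Type*) := (ℕ ×ₗ ℕ) ⊕ₗ A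

variable {A : Type*} [LinearOrder A] {m k : ℕ}

/-- `symAt s (q, l) t` is the `t`-th symbol (0-indexed) of the `l`-suffix of the
string `s q` (a string of length `k`), padded beyond its end with its own ranked sentinel. -/
def symAt (s : Fin m → Fin k → A) (o : Fin m × Fin (k+1)) (t : ℕ) : SSym A :=
  if _h : t < (o.2 : ℕ) then
    toLex (Sum.inr (s o.1 ⟨k - (o.2 : ℕ) + t, by have := o.2.isLt; omega⟩))
  else
    toLex (Sum.inl (toLex ((o.2 : ℕ), (o.1 : ℕ))))

/-- The `p`-prefix of the suffix occurrence `o`. -/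
def pprefix (s : Fin m → Fin k → A) (p : ℕ) (o : Fin m × Fin (k+1)) : List (SSym A) :=
  List.ofFn fun t : Fin p => symAt s o t

/-- The full suffix string of occurrence `o` (its `l` symbols followed by its sentinel). -/
def suffStr (s : Fin m → Fin k → A) (o : Fin m × Fin (k+1)) : List (SSym A) :=
  List.ofFn fun t : Fin ((o.2 : ℕ) + 1) => symAt s o t

/-- The order `≺_p`: compare `p`-prefixes lexicographically, then suffix lengths,
then string indices. -/
def precP (s : Fin m → Fin k → A) (p : ℕ) (α β : Fin m × Fin (k+1)) : Prop :=
  List.Lex (· < ·) (pprefix s p α) (pprefix s p β) ∨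
    (pprefix s p α = pprefix s p β ∧
      ((α.2 : ℕ) < (β.2 : ℕ) ∨ ((α.2 : ℕ) = (β.2 : ℕ) ∧ (α.1 : ℕ) < (β.1 : ℕ))))

/-- Full lexicographic order on suffix occurrences, ties broken by length then string index. -/
def fullOrd (s : Fin m → Fin k → A) (α β : Fin m × Fin (k+1)) : Prop :=
  List.Lex (· < ·) (suffStr s α) (suffStr s β) ∨
    (suffStr s α = suffStr s β ∧
      ((α.2 : ℕ) < (β.2 : ℕ) ∨ ((α.2 : ℕ) = (β.2 : ℕ) ∧ (α.1 : ℕ) < (β.1 : ℕ))))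

/-- `[b,e]` is the `p`-segment of position `i` in the sorted array `X`:
a position `j` carries the same `p`-prefix as position `i` iff `b ≤ j ≤ e`. -/
def isSeg (s : Fin m → Fin k → A) (p : ℕ) {n : ℕ}
    (X : Fin n → Fin m × Fin (k+1)) (b e i : Fin n) : Prop :=
  b ≤ i ∧ i ≤ e ∧ ∀ j, (pprefix s p (X j) = pprefix s p (X i) ↔ b ≤ j ∧ j ≤ e)

/-- Position `i` is the start of its `p`-segment in the sorted array `X`. -/
def isStart (s : Fin m → Fin k → A) (p : ℕ) {n : ℕ}
    (X : Fin n → Fin m × Fin (k+1)) (i : Fin n) : Prop :=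
  ∀ j, j < i → pprefix s p (X j) ≠ pprefix s p (X i)

/-- The symbol preceding the `l`-suffix of string `o.1` (its sentinel when `l = k`). -/
def prevSym (s : Fin m → Fin k → A) (o : Fin m × Fin (k+1)) : SSym A :=
  if _h : (o.2 : ℕ) < k then
    toLex (Sum.inr (s o.1 ⟨k - (o.2 : ℕ) - 1, by omega⟩))
  else
    toLex (Sum.inl (toLex ((o.2 : ℕ), (o.1 : ℕ))))


/-! Sorting is unique for an antisymmetric order, so the sorted array `X_l` of `l`-suffixes is
exactly the subsequence of the sorted array `X` formed by its suffixes of length `l`. Hence the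
suffix at position `q` of `X`, being the `r`-th suffix of its length `l` in `X`, is the `r`-th
entry of `X_l`, and `B[q] = B_l[r]` since both are the symbol preceding that same suffix. -/

theorem Finset.toList_filter_perm {α : Type*} (s : Finset α) (p : α → Prop) [DecidablePred p] :
    (s.filter p).toList.Perm (s.toList.filter (fun a => decide (p a))) := by
  rw [← Multiset.coe_eq_coe, ← Multiset.filter_coe, Finset.coe_toList, Finset.coe_toList,
    Finset.filter_val]

theorem List.getElem?_filter_countP_take_succ_sub_one {α : Type*} {l : List α} {p : α → Bool}
    {i : ℕ} (hi : i < l.length) (hp : p l[i]) :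
    (l.filter p)[(l.take (i + 1)).countP p - 1]? = some l[i] := by
  have hsplit : l.filter p = (l.take i).filter p ++ l[i] :: (l.drop (i + 1)).filter p := by
    calc l.filter p = (l.take i ++ l[i] :: l.drop (i + 1)).filter p := by
          rw [← List.drop_eq_getElem_cons hi, List.take_append_drop]
      _ = _ := by rw [List.filter_append, List.filter_cons_of_pos hp]
  have hcount : (l.take (i + 1)).countP p = ((l.take i).filter p).length + 1 := by
    rw [List.take_succ_eq_append_getElem hi, List.countP_append, List.countP_eq_length_filter]
    simp [hp]
  rw [hsplit, hcount, Nat.add_sub_cancel, List.getElem?_append_right le_rfl, Nat.sub_self,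
    List.getElem?_cons_zero]

theorem List.eq_filter_of_perm_univ_of_pairwise {α : Type*} [Fintype α] {r : α → α → Prop}
    [Std.Antisymm r] (P : α → Prop) [DecidablePred P] {X M : List α}
    (hX : X.Perm (Finset.univ : Finset α).toList) (hXs : X.Pairwise r)
    (hM : M.Perm (Finset.univ.filter P).toList) (hMs : M.Pairwise r) :
    M = X.filter (fun a => decide (P a)) :=
  (hM.trans ((Finset.toList_filter_perm _ P).trans (hX.filter _).symm)).eq_of_pairwise'
    hMs (hXs.filter _)

instance fullOrd_antisymm (s : Fin m → Fin k → A) : Std.Antisymm (fullOrd s) where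
  antisymm a b := by
    rintro (hab | ⟨hab, htie⟩) (hba | ⟨hba, htie'⟩)
    · exact absurd hba (asymm hab)
    · exact absurd (hba ▸ hab) (asymm (hba ▸ hab))
    · exact absurd (hab ▸ hba) (asymm (hab ▸ hba))
    · omega

/-- Let `B` be the BWT of `S` (the symbols preceding the lexicographically
sorted suffixes `X`) and let `Bl l` be the symbols preceding the sorted `l`-suffixes `Xl l`.
Then the encoding of `B` as an interleave of `Bl 0, …, Bl k` equals the encoding of `X` as
an interleave of `Xl 0, …, Xl k`: position `q` of `B`, which comes from the suffix
`X.get q` of length `(X.get q).2 = I_X q`, is the `r`-th element of `Bl (I_X q)`, where `r`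
is the number of positions `≤ q` of `X` holding a suffix of that same length. -/
theorem encoding_of_bwt_eq_encoding_of_suffixes (s : Fin m → Fin k → A)
    (X : List (Fin m × Fin (k + 1)))
    (hXperm : X.Perm ((Finset.univ : Finset (Fin m × Fin (k + 1))).toList))
    (hXsort : X.Pairwise (fullOrd s))
    (Xl : Fin (k + 1) → List (Fin m × Fin (k + 1)))
    (hXlperm : ∀ l, (Xl l).Perm
      (Finset.univ.filter (fun o : Fin m × Fin (k + 1) => o.2 = l)).toList)
    (hXlsort : ∀ l, (Xl l).Pairwise (fullOrd s))
    (B : List (SSym A)) (hB : B = X.map (prevSym s))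
    (Bl : Fin (k + 1) → List (SSym A)) (hBl : ∀ l, Bl l = (Xl l).map (prevSym s)) :
    ∀ q : Fin X.length,
      B[(q : ℕ)]? =
        (Bl (X.get q).2)[((X.take ((q : ℕ) + 1)).countP (fun o => o.2 == (X.get q).2)) - 1]? := by
  intro q
  set l := (X.get q).2
  have hXl : Xl l = X.filter (fun o => o.2 == l) :=
    List.eq_filter_of_perm_univ_of_pairwise (fun o => o.2 = l) hXperm hXsort
      (hXlperm l) (hXlsort l)
  rw [hB, hBl, List.getElem?_map, List.getElem?_map, hXl,
    List.getElem?_filter_countP_take_succ_sub_one q.isLt (beq_self_eq_true l),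
    List.getElem?_eq_getElem q.isLt]
end

section
/- Let N_{l-1} be the array such that N_{l-1}[i] = q iff the (l-1)-suffix of string s_q is the i-th smallest (l-1)-suffix of the collection S, and let B_{l-1}[i] be the symbol preceding that suffix. For a symbol c, let Π_c(N_{l-1}) be the subsequence of N_{l-1} consisting of entries i with B_{l-1}[i] = c. Then Π_c(N_{l-1}) lists, in sorted order of their l-suffixes, exactly the indices of strings whose l-suffix begins with c. -/
/-- Strict order on string indices given by comparing the `l`-suffixes of the
corresponding strings lexicographically, with ties broken by string index. -/
def suffOrd {A : Type*} [LinearOrder A] {m k : ℕ} (s : Fin m → Fin k → A)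
    (l : ℕ) (q q' : Fin m) : Prop :=
  List.Lex (· < ·) ((List.ofFn (s q)).drop (k - l)) ((List.ofFn (s q')).drop (k - l)) ∨
    ((List.ofFn (s q)).drop (k - l) = (List.ofFn (s q')).drop (k - l) ∧ (q : ℕ) < (q' : ℕ))

theorem List.drop_ofFn_sub_succ {A : Type*} {k l : ℕ} (f : Fin k → A) (hlk : l < k) :
    (List.ofFn f).drop (k - (l + 1)) = f ⟨k - (l + 1), by omega⟩ :: (List.ofFn f).drop (k - l) := by
  rw [List.drop_eq_getElem_cons (by simp; omega), List.getElem_ofFn]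
  congr 2
  omega

theorem suffOrd_succ_of_symbol_eq {A : Type*} [LinearOrder A] {m k : ℕ} (s : Fin m → Fin k → A)
    {l : ℕ} (hlk : l < k) {q q' : Fin m}
    (hsym : s q ⟨k - (l + 1), by omega⟩ = s q' ⟨k - (l + 1), by omega⟩)
    (h : suffOrd s l q q') : suffOrd s (l + 1) q q' := by
  unfold suffOrd
  rw [List.drop_ofFn_sub_succ (s q) hlk, List.drop_ofFn_sub_succ (s q') hlk, hsym]
  rcases h with hlex | ⟨hdrop, hidx⟩
  · exact Or.inl (List.Lex.cons hlex)
  · exact Or.inr ⟨by rw [hdrop], hidx⟩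

/-- Let `N` be the array with `N[i] = q` iff the `(l-1)`-suffix of `s q`
is the `i`-th smallest `(l-1)`-suffix (i.e. `N` is a permutation of all string indices
sorted by `(l-1)`-suffix), and recall that the symbol preceding the `(l-1)`-suffix of
`s q` — the first symbol of its `l`-suffix — is `s q (k - l)`.  For a symbol `c`, the
projection `Π_c(N)` (the subsequence of `N` at positions whose preceding symbol is `c`)
lists, in sorted order of their `l`-suffixes, exactly the indices of strings whose
`l`-suffix begins with `c`. -/
theorem projection_sorted_by_l_suffix {A : Type*} [LinearOrder A] {m k : ℕ}
    (s : Fin m → Fin k → A) (l : ℕ) (hl1 : 1 ≤ l) (hlk : l ≤ k) (c : A)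
    (N : List (Fin m)) (hperm : N.Perm (Finset.univ : Finset (Fin m)).toList)
    (hsort : N.Pairwise (suffOrd s (l - 1))) :
    (N.filter (fun q => s q ⟨k - l, by omega⟩ == c)).Pairwise (suffOrd s l) ∧
      ∀ q : Fin m,
        (q ∈ N.filter (fun q => s q ⟨k - l, by omega⟩ == c) ↔ s q ⟨k - l, by omega⟩ = c) := by
  obtain ⟨l, rfl⟩ : ∃ l', l = l' + 1 := ⟨l - 1, by omega⟩
  rw [Nat.add_sub_cancel] at hsort
  refine ⟨(hsort.filter _).imp_of_mem fun ha hb hab => ?_, fun q => ?_⟩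
  · simp only [List.mem_filter, beq_iff_eq] at ha hb
    exact suffOrd_succ_of_symbol_eq s (by omega) (ha.2.trans hb.2.symm) hab
  · have hq : q ∈ N := hperm.mem_iff.2 (Finset.mem_toList.2 (Finset.mem_univ q))
    simp [hq]
end

section
/- Let [b,e] be a (p-1)-segment of X^{p-1}. Then the multiset of suffixes in X^p[b..e] equals the multiset of suffixes in X^{p-1}[b..e]; i.e., X^p[b..e] is a permutation of X^{p-1}[b..e]. -/
open scoped Classical

variable {A : Type*} [LinearOrder A] {m k : ℕ}

set_option linter.unusedSectionVars false

-- lex append with equal-length prefixes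
lemma lex_append {α : Type*} [LT α] {a b : List α} (h : List.Lex (· < ·) a b)
    (hl : a.length = b.length) (u v : List α) :
    List.Lex (· < ·) (a ++ u) (b ++ v) := by
  induction h with
  | nil => simp at hl
  | @cons a l1 l2 h ih => exact List.Lex.cons (ih (by simpa using hl))
  | rel h => exact List.Lex.rel h

lemma pprefix_succ (s : Fin m → Fin k → A) (o : Fin m × Fin (k+1)) (q : ℕ) :
    pprefix s (q+1) o = pprefix s q o ++ [symAt s o q] := by
  rw [pprefix, List.ofFn_succ']
  simp [pprefix, List.concat_eq_append]

lemma pprefix_length (s : Fin m → Fin k → A) (q : ℕ) (o : Fin m × Fin (k+1)) :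
    (pprefix s q o).length = q := by simp [pprefix]

lemma pprefix_lt_succ {s : Fin m → Fin k → A} {q : ℕ} {α β : Fin m × Fin (k+1)}
    (h : pprefix s q α < pprefix s q β) :
    pprefix s (q+1) α < pprefix s (q+1) β := by
  rw [pprefix_succ, pprefix_succ]
  exact lex_append h (by simp [pprefix_length]) _ _

lemma pprefix_eq_of_succ {s : Fin m → Fin k → A} {q : ℕ} {α β : Fin m × Fin (k+1)}
    (h : pprefix s (q+1) α = pprefix s (q+1) β) :
    pprefix s q α = pprefix s q β := by
  rw [pprefix_succ, pprefix_succ] at h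
  exact (List.append_inj' h (by simp)).1

lemma mem_iff_lt_card {n : ℕ} (D : Finset (Fin n))
    (hD : ∀ i j : Fin n, i ≤ j → j ∈ D → i ∈ D) (j : Fin n) :
    j ∈ D ↔ (j : ℕ) < D.card := by
  constructor
  · intro hj
    have h1 : Finset.Iic j ⊆ D := fun i hi => hD i j (Finset.mem_Iic.mp hi) hj
    have := Finset.card_le_card h1
    rw [Fin.card_Iic] at this
    omega
  · intro hj
    by_contra hj'
    have h2 : D ⊆ Finset.Iio j := by
      intro x hx
      rw [Finset.mem_Iio]
      by_contra hxx
      exact hj' (hD j x (le_of_not_gt hxx) hx)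
    have := Finset.card_le_card h2
    rw [Fin.card_Iio] at this
    omega

lemma card_filter_comp {n : ℕ} {β : Type*} [Fintype β]
    (X : Fin n → β) (hX : Function.Bijective X) (Q : β → Prop)
    [DecidablePred Q] [DecidablePred fun j => Q (X j)] :
    (Finset.univ.filter (fun j => Q (X j))).card = (Finset.univ.filter Q).card := by
  apply Finset.card_bij (fun j _ => X j)
  · intro a ha
    simp only [Finset.mem_filter, Finset.mem_univ, true_and] at *
    exact ha
  · intro a _ b _ h
    exact hX.injective h
  · intro x hx
    obtain ⟨j, rfl⟩ := hX.surjective x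
    simp only [Finset.mem_filter, Finset.mem_univ, true_and] at *
    exact ⟨j, hx, rfl⟩

lemma interval_char {n : ℕ} (s : Fin m → Fin k → A) (q : ℕ)
    (X : Fin n → Fin m × Fin (k+1)) (hX : Function.Bijective X)
    (mono : ∀ i j : Fin n, i ≤ j → ¬ (pprefix s q (X j) < pprefix s q (X i)))
    (P : List (SSym A)) (j : Fin n) :
    pprefix s q (X j) = P ↔
      (Finset.univ.filter (fun x : Fin m × Fin (k+1) => pprefix s q x < P)).card ≤ (j : ℕ) ∧
      (j : ℕ) < (Finset.univ.filter (fun x : Fin m × Fin (k+1) => pprefix s q x ≤ P)).card := by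
  have h1 : ∀ j : Fin n, pprefix s q (X j) < P ↔
      (j : ℕ) < (Finset.univ.filter (fun x : Fin m × Fin (k+1) => pprefix s q x < P)).card := by
    intro j
    have hm := mem_iff_lt_card (Finset.univ.filter (fun j => pprefix s q (X j) < P))
      (fun i j hij hj => by
        simp only [Finset.mem_filter, Finset.mem_univ, true_and] at *
        exact lt_of_le_of_lt (not_lt.mp (mono i j hij)) hj) j
    simp only [Finset.mem_filter, Finset.mem_univ, true_and] at hm
    rw [hm, card_filter_comp X hX (fun x => pprefix s q x < P)]
  have h2 : ∀ j : Fin n, pprefix s q (X j) ≤ P ↔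
      (j : ℕ) < (Finset.univ.filter (fun x : Fin m × Fin (k+1) => pprefix s q x ≤ P)).card := by
    intro j
    have hm := mem_iff_lt_card (Finset.univ.filter (fun j => pprefix s q (X j) ≤ P))
      (fun i j hij hj => by
        simp only [Finset.mem_filter, Finset.mem_univ, true_and] at *
        exact le_trans (not_lt.mp (mono i j hij)) hj) j
    simp only [Finset.mem_filter, Finset.mem_univ, true_and] at hm
    rw [hm, card_filter_comp X hX (fun x => pprefix s q x ≤ P)]
  constructor
  · intro h
    refine ⟨not_lt.mp (fun hc => ?_), (h2 j).mp (le_of_eq h)⟩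
    exact absurd ((h1 j).mpr hc) (by rw [h]; exact lt_irrefl P)
  · rintro ⟨hge, hle⟩
    have hle' := (h2 j).mpr hle
    have hlt' : ¬ pprefix s q (X j) < P := fun hc => by
      have := (h1 j).mp hc
      omega
    exact le_antisymm hle' (not_lt.mp hlt')


/-- Let `[b,e]` be a `(p-1)`-segment of `X^{p-1}`.  Then
`X^p[b..e]` is a permutation of `X^{p-1}[b..e]`: both intervals hold the same set of
suffix occurrences. -/
theorem segment_permutation (s : Fin m → Fin k → A) (p : ℕ) (hp : 1 ≤ p)
    (Xprev Xcur : Fin ((k + 1) * m) → Fin m × Fin (k + 1))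
    (hbij1 : Function.Bijective Xprev)
    (hsort1 : ∀ i j, i < j → precP s (p - 1) (Xprev i) (Xprev j))
    (hbij2 : Function.Bijective Xcur)
    (hsort2 : ∀ i j, i < j → precP s p (Xcur i) (Xcur j))
    (b e : Fin ((k + 1) * m)) (hseg : isSeg s (p - 1) Xprev b e b) :
    ∀ x : Fin m × Fin (k + 1),
      (∃ j, b ≤ j ∧ j ≤ e ∧ Xprev j = x) ↔ (∃ j, b ≤ j ∧ j ≤ e ∧ Xcur j = x) := by
  intro x
  have n := (k + 1) * m
  set q := p - 1 with hq
  set P := pprefix s q (Xprev b) with hP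
  -- monotonicity of (p-1)-prefixes along Xprev
  have mono1 : ∀ i j : Fin ((k+1)*m), i ≤ j →
      ¬ (pprefix s q (Xprev j) < pprefix s q (Xprev i)) := by
    intro i j hij hc
    rcases eq_or_lt_of_le hij with rfl | hlt
    · exact lt_irrefl _ hc
    · rcases hsort1 i j hlt with h | ⟨h, _⟩
      · exact lt_asymm h hc
      · rw [h] at hc; exact lt_irrefl _ hc
  -- monotonicity of (p-1)-prefixes along Xcur
  have mono2 : ∀ i j : Fin ((k+1)*m), i ≤ j →
      ¬ (pprefix s q (Xcur j) < pprefix s q (Xcur i)) := by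
    intro i j hij hc
    rcases eq_or_lt_of_le hij with rfl | hlt
    · exact lt_irrefl _ hc
    · have hp' : p = q + 1 := by omega
      have hc' : pprefix s p (Xcur j) < pprefix s p (Xcur i) := by
        rw [hp']; exact pprefix_lt_succ hc
      rcases hsort2 i j hlt with h | ⟨h, _⟩
      · exact lt_asymm h hc'
      · rw [hp'] at h
        rw [pprefix_eq_of_succ h] at hc
        exact lt_irrefl _ hc
  have char1 := interval_char s q Xprev hbij1 mono1 P
  have char2 := interval_char s q Xcur hbij2 mono2 P
  -- the segment [b,e] is exactly the interval [c1, c2) for both arrays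
  have hbe : ∀ j : Fin ((k+1)*m), (b ≤ j ∧ j ≤ e) ↔
      ((Finset.univ.filter (fun x : Fin m × Fin (k+1) => pprefix s q x < P)).card ≤ (j : ℕ) ∧
       (j : ℕ) < (Finset.univ.filter (fun x : Fin m × Fin (k+1) => pprefix s q x ≤ P)).card) := by
    intro j
    rw [← hseg.2.2 j, ← hP]
    exact char1 j
  constructor
  · rintro ⟨j, hb, he, rfl⟩
    have hxP : pprefix s q (Xprev j) = P := by rw [hP, hseg.2.2 j]; exact ⟨hb, he⟩
    obtain ⟨j', hj'⟩ := hbij2.surjective (Xprev j)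
    have : pprefix s q (Xcur j') = P := by rw [hj']; exact hxP
    have hbounds := (char2 j').mp this
    have := (hbe j').mpr hbounds
    exact ⟨j', this.1, this.2, hj'⟩
  · rintro ⟨j, hb, he, rfl⟩
    have hbounds := (hbe j).mp ⟨hb, he⟩
    have hxP : pprefix s q (Xcur j) = P := (char2 j).mpr hbounds
    obtain ⟨j', hj'⟩ := hbij1.surjective (Xcur j)
    have : pprefix s q (Xprev j') = P := by rw [hj']; exact hxP
    have hb' : b ≤ j' ∧ j' ≤ e := by rw [← hseg.2.2 j']; rw [this, hP]
    exact ⟨j', hb'.1, hb'.2, hj'⟩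
end

section
/- For every p ≥ 1, the partition of positions {1,...,(k+1)m} into p-segments of X^p refines the partition into (p-1)-segments of X^{p-1}: every p-segment of X^p is contained in some (p-1)-segment of X^{p-1} (after identifying the multisets of suffixes in corresponding intervals). -/
/-! Under `≺_p` and under `≺_{p-1}` the `(p-1)`-prefixes appear in nondecreasing order, so the
two arrays, being orderings of the same suffixes, carry the same sequence of `(p-1)`-prefixes.
The `(p-1)`-segment of `X^{p-1}` through `b` is then a fiber of a monotone map, hence an
interval, and it contains `e` because the suffixes at `b` and `e` in `X^p` share even their
`p`-prefix. -/

open scoped Classical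

variable {A : Type*} [LinearOrder A] {m k : ℕ}

theorem List.Lex.of_take {α : Type*} {r : α → α → Prop} :
    ∀ {n : ℕ} {l₁ l₂ : List α}, List.Lex r (l₁.take n) (l₂.take n) → List.Lex r l₁ l₂
  | 0, _, _, h => absurd h List.not_lex_nil
  | _ + 1, [], [], h => absurd h List.not_lex_nil
  | _ + 1, [], _ :: _, _ => List.Lex.nil
  | _ + 1, _ :: _, [], h => absurd h List.not_lex_nil
  | _ + 1, _ :: _, _ :: _, h => by
    rcases List.cons_lex_cons_iff.mp h with hr | ⟨rfl, ht⟩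
    · exact List.Lex.rel hr
    · exact List.Lex.cons (List.Lex.of_take ht)

theorem take_pprefix {A : Type*} (s : Fin m → Fin k → A) {q p : ℕ} (hqp : q ≤ p)
    (o : Fin m × Fin (k+1)) : (pprefix s p o).take q = pprefix s q o := by
  obtain ⟨r, rfl⟩ := Nat.exists_eq_add_of_le hqp
  simp [pprefix, List.ofFn_add]

theorem pprefix_le_of_precP (s : Fin m → Fin k → A) {q p : ℕ} (hqp : q ≤ p)
    {α β : Fin m × Fin (k+1)} (h : precP s p α β) : pprefix s q α ≤ pprefix s q β := by
  rcases h with hlt | ⟨heq, -⟩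
  · refine not_lt.mp fun hgt => ?_
    rw [← take_pprefix s hqp, ← take_pprefix s hqp] at hgt
    exact lt_asymm (show pprefix s p α < pprefix s p β from hlt) (List.Lex.of_take hgt)
  · rw [← take_pprefix s hqp, ← take_pprefix s hqp, heq]

theorem monotone_pprefix_comp (s : Fin m → Fin k → A) {q p n : ℕ} (hqp : q ≤ p)
    {X : Fin n → Fin m × Fin (k+1)} (hsort : ∀ i j, i < j → precP s p (X i) (X j)) :
    Monotone (pprefix s q ∘ X) :=
  monotone_iff_forall_lt.mpr fun i j hij => pprefix_le_of_precP s hqp (hsort i j hij)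

theorem comp_eq_comp_of_monotone {ι β : Type*} [PartialOrder β] {n : ℕ} {F : ι → β}
    {X Y : Fin n → ι} (hX : X.Bijective) (hY : Y.Bijective)
    (hFX : Monotone (F ∘ X)) (hFY : Monotone (F ∘ Y)) : F ∘ X = F ∘ Y := by
  let τ : Equiv.Perm (Fin n) := (Equiv.ofBijective Y hY).trans (Equiv.ofBijective X hX).symm
  have hY : Y = X ∘ τ := by
    funext j
    simp [τ, ← Equiv.ofBijective_apply X hX]
  rw [hY] at hFY ⊢
  exact Tuple.unique_monotone (f := F ∘ X) (σ := 1) hFX hFY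

theorem Monotone.exists_fiber_eq_Icc {ι β : Type*} [LinearOrder ι] [Fintype ι]
    [PartialOrder β] {G : ι → β} (hG : Monotone G) (b : ι) :
    ∃ b' e', ∀ j, G j = G b ↔ b' ≤ j ∧ j ≤ e' := by
  let S : Finset ι := {j | G j = G b}
  have hbS : b ∈ S := by simp [S]
  have hS : S.Nonempty := ⟨b, hbS⟩
  have hmin : G (S.min' hS) = G b := by simpa [S] using S.min'_mem hS
  have hmax : G (S.max' hS) = G b := by simpa [S] using S.max'_mem hS
  refine ⟨S.min' hS, S.max' hS, fun j => ⟨fun hj => ?_, fun ⟨hlo, hhi⟩ => ?_⟩⟩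
  · have hjS : j ∈ S := by simpa [S] using hj
    exact ⟨S.min'_le j hjS, S.le_max' j hjS⟩
  · exact le_antisymm (hmax ▸ hG hhi) (hmin ▸ hG hlo)

theorem pSegments_refine_general (s : Fin m → Fin k → A) (p : ℕ)
    (Xprev Xcur : Fin ((k + 1) * m) → Fin m × Fin (k + 1))
    (hbij1 : Function.Bijective Xprev)
    (hsort1 : ∀ i j, i < j → precP s (p - 1) (Xprev i) (Xprev j))
    (hbij2 : Function.Bijective Xcur)
    (hsort2 : ∀ i j, i < j → precP s p (Xcur i) (Xcur j)) :
    ∀ b e i, isSeg s p Xcur b e i →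
      ∃ b' e', isSeg s (p - 1) Xprev b' e' b' ∧ b' ≤ b ∧ e ≤ e' := by
  intro b e i ⟨hbi, hie, hseg⟩
  have hprev := monotone_pprefix_comp s le_rfl hsort1
  have hcur := monotone_pprefix_comp s (Nat.sub_le p 1) hsort2
  have hsame : ∀ j, pprefix s (p - 1) (Xprev j) = pprefix s (p - 1) (Xcur j) :=
    congrFun (comp_eq_comp_of_monotone (F := pprefix s (p - 1)) hbij1 hbij2 hprev hcur)
  obtain ⟨b', e', hfiber⟩ := hprev.exists_fiber_eq_Icc b
  obtain ⟨hb'b, hbe'⟩ := (hfiber b).mp rfl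
  have hb' : pprefix s (p - 1) (Xprev b') = pprefix s (p - 1) (Xprev b) :=
    (hfiber b').mpr ⟨le_rfl, hb'b.trans hbe'⟩
  have hpe : pprefix s p (Xcur e) = pprefix s p (Xcur b) :=
    ((hseg e).mpr ⟨hbi.trans hie, le_rfl⟩).trans ((hseg b).mpr ⟨le_rfl, hbi.trans hie⟩).symm
  have hpe' : pprefix s (p - 1) (Xprev e) = pprefix s (p - 1) (Xprev b) := by
    rw [hsame, hsame, ← take_pprefix s (Nat.sub_le p 1), ← take_pprefix s (Nat.sub_le p 1), hpe]
  exact ⟨b', e', ⟨le_rfl, hb'b.trans hbe', fun j => hb' ▸ hfiber j⟩, hb'b, ((hfiber e).mp hpe').2⟩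

/-- For every `p ≥ 1`, the partition of positions into `p`-segments of
`X^p` refines the partition into `(p-1)`-segments of `X^{p-1}`: every `p`-segment of
`X^p` is contained in some `(p-1)`-segment of `X^{p-1}`. -/
theorem pSegments_refine (s : Fin m → Fin k → A) (p : ℕ) (hp : 1 ≤ p)
    (Xprev Xcur : Fin ((k + 1) * m) → Fin m × Fin (k + 1))
    (hbij1 : Function.Bijective Xprev)
    (hsort1 : ∀ i j, i < j → precP s (p - 1) (Xprev i) (Xprev j))
    (hbij2 : Function.Bijective Xcur)
    (hsort2 : ∀ i j, i < j → precP s p (Xcur i) (Xcur j)) :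
    ∀ b e i, isSeg s p Xcur b e i →
      ∃ b' e', isSeg s (p - 1) Xprev b' e' b' ∧ b' ≤ b ∧ e ≤ e' :=
  pSegments_refine_general s p Xprev Xcur hbij1 hsort1 hbij2 hsort2
end

section
/- Let L be the length of the longest substring occurring at least twice among the strings of S (counting occurrences in distinct strings or distinct positions). Then every (L+1)-prefix of a suffix of length at least L+1 is unique among all suffixes; consequently every (L+1)-segment of X^{L+1} has width 1, and X^p = X^{L+1} = X for all p ≥ L+1. -/
open scoped Classical

variable {A : Type*} [LinearOrder A] {m k : ℕ}

/-!
Two distinct suffix occurrences `α ≠ β` first differ at some index `t ≤ min α.2 β.2`, because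
at the shorter one's end a sentinel is read, and sentinels are distinct from each other and
from letters. Below `t` both read genuine letters, so the two occurrences share a substring of
length `t`, whence `t ≤ L`. Hence for every `p ≥ L + 1` the `p`-prefixes of `α` and `β` already
differ, and both `≺_p` and the full suffix order are decided by the symbols at index `t`: they
agree, and an array sorted by `≺_p` is the (unique) fully sorted one.
-/

theorem List.lex_ofFn_iff_of_eqOn_of_ne {T : Type*} {r : T → T → Prop} [Std.Irrefl r]
    {f g : ℕ → T} {t : ℕ}
    (hagree : ∀ u < t, f u = g u) (hne : f t ≠ g t) {n n' : ℕ} (hn : t < n) (hn' : t < n') :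
    List.Lex r (List.ofFn fun i : Fin n => f i) (List.ofFn fun i : Fin n' => g i) ↔
      r (f t) (g t) := by
  induction t generalizing f g n n' with
  | zero =>
    obtain ⟨n, rfl⟩ := Nat.exists_eq_add_one_of_ne_zero (by omega : n ≠ 0)
    obtain ⟨n', rfl⟩ := Nat.exists_eq_add_one_of_ne_zero (by omega : n' ≠ 0)
    simp [List.ofFn_succ, List.cons_lex_cons_iff, hne]
  | succ t ih =>
    obtain ⟨n, rfl⟩ := Nat.exists_eq_add_one_of_ne_zero (by omega : n ≠ 0)
    obtain ⟨n', rfl⟩ := Nat.exists_eq_add_one_of_ne_zero (by omega : n' ≠ 0)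
    have h0 : f 0 = g 0 := hagree 0 (by omega)
    have htail := ih (f := fun u => f (u + 1)) (g := fun u => g (u + 1))
      (fun u hu => hagree (u + 1) (by omega)) hne (n := n) (n' := n') (by omega) (by omega)
    simpa [List.ofFn_succ, h0, List.lex_cons_iff] using htail

theorem List.ofFn_ne_of_ne {T : Type*} {f g : ℕ → T} {t n n' : ℕ} (hn : t < n) (hn' : t < n')
    (hne : f t ≠ g t) : (List.ofFn fun i : Fin n => f i) ≠ List.ofFn fun i : Fin n' => g i := by
  intro h
  simpa [hn, hn', hne] using congrArg (·[t]?) h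

theorem eq_of_surjective_of_sorted {ι β : Type*} [LinearOrder ι] [WellFoundedLT ι]
    {r : β → β → Prop} (hr : ∀ a b, r a b → ¬ r b a) {f g : ι → β}
    (hf : Function.Surjective f) (hg : Function.Bijective g)
    (hfr : ∀ i j, i < j → r (f i) (f j)) (hgr : ∀ i j, i < j → r (g i) (g j)) : f = g := by
  let e := Equiv.ofBijective g hg
  let σ : ι → ι := e.symm ∘ f
  have hgσ : ∀ i, g (σ i) = f i := fun i => e.apply_symm_apply (f i)
  have hσ : StrictMono σ := by
    intro i j hij
    refine lt_of_not_ge fun hji => hr _ _ (hfr i j hij) ?_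
    rcases hji.lt_or_eq with hlt | heq
    · simpa only [hgσ] using hgr _ _ hlt
    · simpa only [← hgσ, heq] using hfr i j hij
  have hσ_id : σ = id :=
    (hσ.range_inj strictMono_id).mp <| by
      rw [Set.range_id, Set.range_eq_univ]
      exact e.symm.surjective.comp hf
  funext i
  rw [← hgσ, hσ_id, id]

def RepeatsBoundedBy (s : Fin m → Fin k → A) (L : ℕ) : Prop :=
  ∀ (t : ℕ) (q q' : Fin m) (i i' : ℕ) (hi : i + t ≤ k) (hi' : i' + t ≤ k),
    ((q : ℕ), i) ≠ ((q' : ℕ), i') →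
    (∀ u, (hu : u < t) → s q ⟨i + u, (Nat.add_lt_add_left hu i).trans_le hi⟩ =
      s q' ⟨i' + u, (Nat.add_lt_add_left hu i').trans_le hi'⟩) → t ≤ L

section FirstDifference

variable {B : Type*} {α β : Fin m × Fin (k + 1)}

theorem symAt_min_ne (s : Fin m → Fin k → B) (hne : α ≠ β) :
    symAt s α (min (α.2 : ℕ) β.2) ≠ symAt s β (min (α.2 : ℕ) β.2) := by
  intro h
  unfold symAt at h
  split_ifs at h with hα hβ hβ
  · omega
  · simp at h
  · simp at h
  · simp only [toLex_inj, Sum.inl.injEq, Prod.mk.injEq] at h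
    exact hne (Prod.ext (Fin.val_injective h.2) (Fin.val_injective h.1))

theorem RepeatsBoundedBy.le_of_symAt_eq {s : Fin m → Fin k → B} {L t : ℕ}
    (hL : RepeatsBoundedBy s L) (hne : α ≠ β)
    (htα : t ≤ α.2) (htβ : t ≤ β.2) (hagree : ∀ u < t, symAt s α u = symAt s β u) : t ≤ L := by
  have hα := α.2.isLt
  have hβ := β.2.isLt
  -- the `l`-suffix of a string of length `k` starts at position `k - l`
  refine hL t α.1 β.1 (k - α.2) (k - β.2) (by omega) (by omega) ?_ fun u hu => ?_
  · intro h
    simp only [Prod.mk.injEq] at h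
    exact hne (Prod.ext (Fin.val_injective h.1) (Fin.val_injective (by omega)))
  · have h := hagree u hu
    rw [symAt, symAt, dif_pos (by omega), dif_pos (by omega)] at h
    simpa using h

theorem RepeatsBoundedBy.exists_first_symAt_ne {s : Fin m → Fin k → B} {L : ℕ}
    (hL : RepeatsBoundedBy s L) (hne : α ≠ β) :
    ∃ t ≤ L, t ≤ α.2 ∧ t ≤ β.2 ∧ (∀ u < t, symAt s α u = symAt s β u) ∧
      symAt s α t ≠ symAt s β t := by
  have hex : ∃ t, symAt s α t ≠ symAt s β t := ⟨_, symAt_min_ne s hne⟩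
  have hmin : Nat.find hex ≤ min (α.2 : ℕ) β.2 := Nat.find_min' hex (symAt_min_ne s hne)
  have hagree : ∀ u < Nat.find hex, symAt s α u = symAt s β u :=
    fun u hu => not_ne_iff.mp (Nat.find_min hex hu)
  exact ⟨Nat.find hex, hL.le_of_symAt_eq hne (by omega) (by omega) hagree,
    by omega, by omega, hagree, Nat.find_spec hex⟩

theorem RepeatsBoundedBy.pprefix_injective {s : Fin m → Fin k → B} {L p : ℕ}
    (hL : RepeatsBoundedBy s L) (hp : L + 1 ≤ p) :
    Function.Injective (pprefix s p) := by
  intro α β h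
  by_contra hne
  obtain ⟨t, htL, -, -, -, hdiff⟩ := hL.exists_first_symAt_ne hne
  exact List.ofFn_ne_of_ne (by omega) (by omega) hdiff h

end FirstDifference

theorem fullOrd_asymm (s : Fin m → Fin k → A) (α β : Fin m × Fin (k + 1)) :
    fullOrd s α β → ¬ fullOrd s β α := by
  have hirr := List.lex_irrefl (r := (· < ·)) (fun a : SSym A => lt_irrefl a)
  rintro (h | ⟨h, h'⟩) (g | ⟨g, g'⟩)
  · exact _root_.asymm h g
  · exact hirr _ (g ▸ h)
  · exact hirr _ (h ▸ g)
  · omega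

theorem RepeatsBoundedBy.precP_iff_fullOrd {s : Fin m → Fin k → A} {L p : ℕ}
    (hL : RepeatsBoundedBy s L) (hp : L + 1 ≤ p)
    {α β : Fin m × Fin (k + 1)} (hne : α ≠ β) : precP s p α β ↔ fullOrd s α β := by
  obtain ⟨t, htL, htα, htβ, hagree, hdiff⟩ := hL.exists_first_symAt_ne hne
  have hpre : List.Lex (· < ·) (pprefix s p α) (pprefix s p β) ↔ symAt s α t < symAt s β t :=
    List.lex_ofFn_iff_of_eqOn_of_ne hagree hdiff (by omega) (by omega)
  have hsuf : List.Lex (· < ·) (suffStr s α) (suffStr s β) ↔ symAt s α t < symAt s β t :=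
    List.lex_ofFn_iff_of_eqOn_of_ne hagree hdiff (by omega) (by omega)
  have hpre_ne : pprefix s p α ≠ pprefix s p β :=
    List.ofFn_ne_of_ne (by omega) (by omega) hdiff
  have hsuf_ne : suffStr s α ≠ suffStr s β :=
    List.ofFn_ne_of_ne (by omega) (by omega) hdiff
  simp only [precP, fullOrd, hpre, hsuf, hpre_ne, hsuf_ne, false_and, or_false]

/-- Let `L` be (an upper bound witnessing) the length of the longest
substring occurring at least twice among the strings of `S` (occurrences at distinct
strings or distinct positions).  Then every `(L+1)`-prefix of a suffix of length at least
`L+1` is unique among all suffixes; consequently every `(L+1)`-segment of `X^{L+1}` has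
width `1`, and `X^p = X^{L+1} = X` for all `p ≥ L+1`. -/
theorem longest_repeat_bounds_iterations (s : Fin m → Fin k → A) (L : ℕ)
    (hL : ∀ (t : ℕ) (q q' : Fin m) (i i' : ℕ) (hi : i + t ≤ k) (hi' : i' + t ≤ k),
      ((q : ℕ), i) ≠ ((q' : ℕ), i') →
      (∀ u, (hu : u < t) → s q ⟨i + u, by omega⟩ = s q' ⟨i' + u, by omega⟩) →
      t ≤ L)
    (X : ℕ → Fin ((k + 1) * m) → Fin m × Fin (k + 1))
    (hbij : ∀ p, Function.Bijective (X p))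
    (hsort : ∀ p i j, i < j → precP s p (X p i) (X p j))
    (x : Fin ((k + 1) * m) → Fin m × Fin (k + 1))
    (hxbij : Function.Bijective x)
    (hxsort : ∀ i j, i < j → fullOrd s (x i) (x j)) :
    (∀ α β : Fin m × Fin (k + 1), L + 1 ≤ (α.2 : ℕ) → L + 1 ≤ (β.2 : ℕ) →
      pprefix s (L + 1) α = pprefix s (L + 1) β → α = β) ∧
    (∀ i j : Fin ((k + 1) * m),
      pprefix s (L + 1) (X (L + 1) i) = pprefix s (L + 1) (X (L + 1) j) → i = j) ∧
    (∀ p, L + 1 ≤ p → ∀ i, X p i = x i) := by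
  have hrep : RepeatsBoundedBy s L := hL
  have hinj := hrep.pprefix_injective le_rfl
  refine ⟨fun α β _ _ h => hinj h, fun i j h => (hbij (L + 1)).1 (hinj h), fun p hp => ?_⟩
  have hfull : ∀ i j, i < j → fullOrd s (X p i) (X p j) := fun i j hij =>
    (hrep.precP_iff_fullOrd hp ((hbij p).1.ne hij.ne)).mp (hsort p i j hij)
  exact congrFun (eq_of_surjective_of_sorted (fullOrd_asymm s) (hbij p).2 hxbij hfull hxsort)
end

section
/- If all p-segments of X^p have width 1 (i.e., all p-prefixes of suffixes are pairwise distinct under the ≺_p tie-breaking), then X^{p+1} = X^p, and by induction X^q = X^p for all q ≥ p; in particular X^p equals the fully sorted suffix array X. -/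
open scoped Classical

variable {A : Type*} [LinearOrder A] {m k : ℕ}

/-!
If the `p`-prefixes of distinct suffixes are distinct, then any two suffixes first differ at some
position `t < p` that does not lie beyond either sentinel. That symbol comparison decides `≺_q` for
every `q ≥ p` as well as the full lexicographic order, so all these orders agree with `≺_p`. An
array sorted by a strict order is determined by the set of its entries, hence `X^q = X^p = X`.
-/

theorem List.append_lt_append_left_iff {C : Type*} [LT C] [Std.Irrefl (· < · : C → C → Prop)]
    (c : List C) {l₁ l₂ : List C} : c ++ l₁ < c ++ l₂ ↔ l₁ < l₂ := by
  induction c with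
  | nil => rfl
  | cons a c ih => simpa using ih

theorem List.lt_iff_of_take_eq_of_getElem_ne {C : Type*} [LinearOrder C] {l₁ l₂ : List C} {t : ℕ}
    (h₁ : t < l₁.length) (h₂ : t < l₂.length) (htake : l₁.take t = l₂.take t)
    (hne : l₁[t] ≠ l₂[t]) : l₁ < l₂ ↔ l₁[t] < l₂[t] := by
  have split : ∀ (l : List C) (h : t < l.length), l = l.take t ++ l[t] :: l.drop (t + 1) :=
    fun l h => by rw [← List.drop_eq_getElem_cons h, List.take_append_drop]
  conv_lhs => rw [split l₁ h₁, split l₂ h₂, htake, List.append_lt_append_left_iff,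
    List.cons_lt_cons_iff]
  simp [hne]

theorem eq_of_sorted_of_surjective {ι γ : Type*} [LinearOrder ι] [Finite ι]
    {r : γ → γ → Prop} (hr : ∀ a b, r a b → ¬ r b a) {Y Z : ι → γ}
    (hY : ∀ i j, i < j → r (Y i) (Y j)) (hZ : ∀ i j, i < j → r (Z i) (Z j))
    (hZsurj : Function.Surjective Z) : Y = Z := by
  have lt_of_rel : ∀ i j, r (Z i) (Z j) → i < j := fun i j h => by
    rcases lt_trichotomy i j with hij | rfl | hji
    · exact hij
    · exact absurd h (hr _ _ h)
    · exact absurd h (hr _ _ (hZ j i hji))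
  set σ := Function.surjInv hZsurj ∘ Y
  have hZσ : ∀ i, Z (σ i) = Y i := fun i => Function.surjInv_eq hZsurj (Y i)
  have hσ : StrictMono σ := fun i j hij => lt_of_rel _ _ (by rw [hZσ, hZσ]; exact hY i j hij)
  funext i
  rw [← hZσ, hσ.apply_eq]

section Alphabet

variable {B : Type*} (s : Fin m → Fin k → B) {p t : ℕ} {α β : Fin m × Fin (k + 1)}

theorem pprefix_eq_pprefix_iff :
    pprefix s t α = pprefix s t β ↔ ∀ u < t, symAt s α u = symAt s β u := by
  simp only [pprefix, List.ofFn_inj, funext_iff, Fin.forall_iff]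

theorem suffStr_eq_pprefix : suffStr s α = pprefix s ((α.2 : ℕ) + 1) α := rfl

theorem take_pprefix_s18 {c : ℕ} (h : t ≤ c) : (pprefix s c α).take t = pprefix s t α :=
  List.ext_getElem (by simpa [pprefix]) fun _ _ _ => by simp [pprefix]

theorem getElem_pprefix {c : ℕ} (h : t < c) :
    (pprefix s c α)[t]'(by simpa [pprefix]) = symAt s α t := by
  simp [pprefix]

theorem pprefix_ne_pprefix {a b : ℕ} (hne : symAt s α t ≠ symAt s β t) (ha : t < a) (hb : t < b) :
    pprefix s a α ≠ pprefix s b β := fun h =>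
  hne (by simpa [pprefix, ha, hb] using congrArg (·[t]?) h)

/-- Position `α.2` holds the sentinel of `α`, which no other suffix has there. -/
theorem symAt_length_ne (h : α ≠ β) : symAt s α α.2 ≠ symAt s β α.2 := by
  intro heq
  simp only [symAt, lt_irrefl, dite_false] at heq
  split_ifs at heq with hlt
  · exact Sum.inl_ne_inr (toLex.injective heq)
  · have := toLex.injective (Sum.inl_injective (toLex.injective heq))
    exact h (Prod.ext (Fin.ext (Prod.ext_iff.1 this).2) (Fin.ext (Prod.ext_iff.1 this).1))

theorem exists_first_symAt_ne (h : pprefix s p α ≠ pprefix s p β) :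
    ∃ t < p, t ≤ α.2 ∧ t ≤ β.2 ∧ pprefix s t α = pprefix s t β ∧ symAt s α t ≠ symAt s β t := by
  have hαβ : α ≠ β := by rintro rfl; exact h rfl
  have hex : ∃ t, symAt s α t ≠ symAt s β t := by
    by_contra! hall
    exact h ((pprefix_eq_pprefix_iff s).2 fun u _ => hall u)
  have agree_below : ∀ u < Nat.find hex, symAt s α u = symAt s β u :=
    fun u hu => not_not.1 (Nat.find_min hex hu)
  refine ⟨Nat.find hex, ?_, Nat.find_min' hex (symAt_length_ne s hαβ),
    Nat.find_min' hex (symAt_length_ne s hαβ.symm).symm,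
    (pprefix_eq_pprefix_iff s).2 agree_below, Nat.find_spec hex⟩
  by_contra! hle
  exact h ((pprefix_eq_pprefix_iff s).2 fun u hu => agree_below u (by omega))

end Alphabet

section Suffixes

variable (s : Fin m → Fin k → A) {p q : ℕ} {α β : Fin m × Fin (k + 1)}

theorem pprefix_lt_pprefix_iff {a b : ℕ} (ht : pprefix s t α = pprefix s t β)
    (hne : symAt s α t ≠ symAt s β t) (ha : t < a) (hb : t < b) :
    pprefix s a α < pprefix s b β ↔ symAt s α t < symAt s β t := by
  rw [← getElem_pprefix s ha, ← getElem_pprefix s hb]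
  exact List.lt_iff_of_take_eq_of_getElem_ne _ _
    (by rw [take_pprefix_s18 s ha.le, take_pprefix_s18 s hb.le, ht])
    (by rwa [getElem_pprefix s ha, getElem_pprefix s hb])

theorem precP_asymm (h : precP s p α β) : ¬ precP s p β α := by
  rintro (hlt' | ⟨heq', hlen'⟩) <;> rcases h with hlt | ⟨heq, hlen⟩
  · exact List.lt_asymm hlt hlt'
  · exact List.lt_irrefl _ (heq ▸ hlt')
  · exact List.lt_irrefl _ (heq' ▸ hlt)
  · omega

theorem lt_or_eq_and_iff_symAt_lt {a b t : ℕ} {c : Prop} (ht : pprefix s t α = pprefix s t β)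
    (hne : symAt s α t ≠ symAt s β t) (ha : t < a) (hb : t < b) :
    (List.Lex (· < ·) (pprefix s a α) (pprefix s b β) ∨ (pprefix s a α = pprefix s b β ∧ c)) ↔
      symAt s α t < symAt s β t := by
  rw [or_iff_left (fun h => pprefix_ne_pprefix s hne ha hb h.1)]
  exact pprefix_lt_pprefix_iff s ht hne ha hb

theorem precP_iff_precP_of_pprefix_ne (hq : p ≤ q) (h : pprefix s p α ≠ pprefix s p β) :
    precP s q α β ↔ precP s p α β := by
  obtain ⟨t, htp, -, -, ht, hne⟩ := exists_first_symAt_ne s h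
  rw [precP, precP, lt_or_eq_and_iff_symAt_lt s ht hne (by omega) (by omega),
    lt_or_eq_and_iff_symAt_lt s ht hne htp htp]

theorem fullOrd_iff_precP_of_pprefix_ne (h : pprefix s p α ≠ pprefix s p β) :
    fullOrd s α β ↔ precP s p α β := by
  obtain ⟨t, htp, htα, htβ, ht, hne⟩ := exists_first_symAt_ne s h
  rw [fullOrd, precP, suffStr_eq_pprefix, suffStr_eq_pprefix,
    lt_or_eq_and_iff_symAt_lt s ht hne (by omega) (by omega),
    lt_or_eq_and_iff_symAt_lt s ht hne htp htp]

end Suffixes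

/-- If all `p`-segments of `X^p` have width `1` (all `p`-prefixes of
suffixes are pairwise distinct), then `X^{p+1} = X^p`, by induction `X^q = X^p` for all
`q ≥ p`, and in particular `X^p` equals the fully sorted suffix array `X`. -/
theorem stable_after_singleton_segments (s : Fin m → Fin k → A)
    (X : ℕ → Fin ((k + 1) * m) → Fin m × Fin (k + 1))
    (hbij : ∀ p, Function.Bijective (X p))
    (hsort : ∀ p i j, i < j → precP s p (X p i) (X p j))
    (x : Fin ((k + 1) * m) → Fin m × Fin (k + 1))
    (hxbij : Function.Bijective x)
    (hxsort : ∀ i j, i < j → fullOrd s (x i) (x j))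
    (p : ℕ)
    (hwidth : ∀ i j, pprefix s p (X p i) = pprefix s p (X p j) → i = j) :
    (∀ i, X (p + 1) i = X p i) ∧
    (∀ q, p ≤ q → ∀ i, X q i = X p i) ∧
    (∀ i, X p i = x i) := by
  have hdist : ∀ α β, α ≠ β → pprefix s p α ≠ pprefix s p β := by
    intro α β hαβ h
    obtain ⟨i, rfl⟩ := (hbij p).surjective α
    obtain ⟨j, rfl⟩ := (hbij p).surjective β
    exact hαβ (congrArg (X p) (hwidth i j h))
  have eq_Xp : ∀ Y : Fin ((k + 1) * m) → Fin m × Fin (k + 1),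
      (∀ i j, i < j → precP s p (Y i) (Y j)) → Y = X p := fun Y hY =>
    eq_of_sorted_of_surjective (r := precP s p) (fun _ _ => precP_asymm s) hY (hsort p)
      (hbij p).surjective
  have hstable : ∀ q, p ≤ q → ∀ i, X q i = X p i := fun q hq => congrFun <| eq_Xp (X q)
    fun i j hij => (precP_iff_precP_of_pprefix_ne s hq
      (hdist _ _ ((hbij q).injective.ne hij.ne))).1 (hsort q i j hij)
  refine ⟨hstable (p + 1) p.le_succ, hstable, fun i => (congrFun (eq_Xp x ?_) i).symm⟩
  exact fun i j hij => (fullOrd_iff_precP_of_pprefix_ne s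
    (hdist _ _ (hxbij.injective.ne hij.ne))).1 (hxsort i j hij)
end
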